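/- arXiv:2105.07524 — 4 statements merged into one kernel-verified Lean document; each statement's English description precedes it below -/
import Mathlib

section
/- Let F be a probability measure on [0,∞), γ, B̄, σ̄ > 0 constants, λ : [0,T] → [0, δ(t)] with δ integrable, K : [0,T]×[0,∞) → [0,1). Define for (t,y) the lower bound w*(t,y) ≥ min{0, (μ(t)-r(t))/(γB(t,T)σ²(t)) - δ(t)∫₀^∞ e^{γB(t,T)z} dF(z)/(γB(t,T)σ²(t))}. Precisely: if w̃ < 0 solves γB σ² w̃ - (μ-r) + λ∫₀^∞ K(z) e^{γB(z + w̃K(z))} dF(z) = 0 with λ ≤ δ and K(z) ∈ [0,1), then w̃ ≥ (μ-r)/(γBσ²) - δ∫₀^∞ e^{γBz} dF(z)/(γBσ²). -/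
open MeasureTheory Real Set

/-! Since `w̃ < 0` and `0 ≤ K(z) < 1`, the integrand `K(z) e^{γB(z + w̃K(z))}` is dominated by
`e^{γBz}`, so the first-order condition gives `γBσ² w̃ = (μ - r) - λ ∫ K e^{…} dF ≥ (μ - r) - δ ∫ e^{γBz} dF`. -/

lemma mul_exp_le_exp_of_nonpos {c k w z : ℝ} (hc : 0 ≤ c) (hk₀ : 0 ≤ k) (hk₁ : k ≤ 1)
    (hw : w ≤ 0) : k * exp (c * (z + w * k)) ≤ exp (c * z) := by
  have hexp : exp (c * (z + w * k)) ≤ exp (c * z) :=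
    exp_le_exp.mpr <| mul_le_mul_of_nonneg_left (by nlinarith) hc
  calc k * exp (c * (z + w * k)) ≤ 1 * exp (c * z) := mul_le_mul hk₁ hexp (exp_pos _).le zero_le_one
    _ = exp (c * z) := one_mul _

lemma integral_mul_exp_le_integral_exp {F : Measure ℝ} {K : ℝ → ℝ} {c w : ℝ} (hc : 0 ≤ c)
    (hK : ∀ z, 0 ≤ K z ∧ K z ≤ 1) (hw : w ≤ 0) (hexp : Integrable (fun z => exp (c * z)) F) :
    ∫ z, K z * exp (c * (z + w * K z)) ∂F ≤ ∫ z, exp (c * z) ∂F :=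
  integral_mono_of_nonneg (.of_forall fun z => mul_nonneg (hK z).1 (exp_pos _).le) hexp
    (.of_forall fun z => mul_exp_le_exp_of_nonpos hc (hK z).1 (hK z).2 hw)

theorem stmt_4_general (γ B σ lam δ μ r wt : ℝ)
    (hγ : 0 < γ) (hB : 0 < B) (hσ : 0 < σ) (hlam : 0 ≤ lam) (hlamδ : lam ≤ δ)
    (F : Measure ℝ)
    (K : ℝ → ℝ) (hK : ∀ z, 0 ≤ K z ∧ K z < 1)
    (hexp : Integrable (fun z => Real.exp (γ * B * z)) F)
    (hwneg : wt < 0)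
    (hroot : γ * B * σ ^ 2 * wt - (μ - r)
        + lam * ∫ z, K z * Real.exp (γ * B * (z + wt * K z)) ∂F = 0) :
    (μ - r) / (γ * B * σ ^ 2)
        - δ * (∫ z, Real.exp (γ * B * z) ∂F) / (γ * B * σ ^ 2) ≤ wt := by
  have hK' : ∀ z, 0 ≤ K z ∧ K z ≤ 1 := fun z => ⟨(hK z).1, (hK z).2.le⟩
  have hI_nonneg : 0 ≤ ∫ z, K z * exp (γ * B * (z + wt * K z)) ∂F :=
    integral_nonneg fun z => mul_nonneg (hK z).1 (exp_pos _).le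
  have hI_le := integral_mul_exp_le_integral_exp (by positivity) hK' hwneg.le hexp
  have hdrift : lam * ∫ z, K z * exp (γ * B * (z + wt * K z)) ∂F
      ≤ δ * ∫ z, exp (γ * B * z) ∂F :=
    mul_le_mul hlamδ hI_le hI_nonneg (hlam.trans hlamδ)
  rw [div_sub_div_same, div_le_iff₀ (by positivity)]
  linarith

/-- Lower bound (5.12) on the optimal investment strategy (Proposition 5.5):
if w̃ < 0 solves the first-order condition at u = 1, then
w̃ ≥ (μ-r)/(γBσ²) - δ ∫ e^{γBz} dF /(γBσ²). -/
theorem stmt_4 (γ B σ lam δ μ r wt : ℝ)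
    (hγ : 0 < γ) (hB : 0 < B) (hσ : 0 < σ) (hlam : 0 ≤ lam) (hlamδ : lam ≤ δ)
    (F : Measure ℝ) [IsProbabilityMeasure F] (hF0 : F (Set.Iio 0) = 0)
    (K : ℝ → ℝ) (hKmeas : Measurable K) (hK : ∀ z, 0 ≤ K z ∧ K z < 1)
    (hexp : Integrable (fun z => Real.exp (γ * B * z)) F)
    (hint : Integrable (fun z => K z * Real.exp (γ * B * (z + wt * K z))) F)
    (hwneg : wt < 0)
    (hroot : γ * B * σ ^ 2 * wt - (μ - r)
        + lam * ∫ z, K z * Real.exp (γ * B * (z + wt * K z)) ∂F = 0) :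
    (μ - r) / (γ * B * σ ^ 2)
        - δ * (∫ z, Real.exp (γ * B * z) ∂F) / (γ * B * σ ^ 2) ≤ wt :=
  stmt_4_general γ B σ lam δ μ r wt hγ hB hσ hlam hlamδ F K hK hexp hwneg hroot
end

section
/- With the same notation, suppose μ(t) - r(t) > λ ∫₀^∞ K(z) e^{γBz} dF(z) (condition defining C₂). Then the unique solution w̃₁ of γBσ²w - (μ-r) + λ∫K(z)e^{γB(z + wK(z))}dF(z) = 0 (first-order condition at u = 1) satisfies w̃₁ > 0, and hence the optimal investment w* > 0. -/
open MeasureTheory Real Set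

section JumpIntegral

variable {F : Measure ℝ} {K : ℝ → ℝ} {c w w' : ℝ}

theorem mul_exp_shift_le_of_le (hc : 0 ≤ c) (z : ℝ) (hKz : 0 ≤ K z) (hw : w ≤ w') :
    K z * exp (c * (z + w * K z)) ≤ K z * exp (c * (z + w' * K z)) := by
  gcongr

theorem integrable_mul_exp_shift_of_le (hKmeas : Measurable K) (hK : ∀ z, 0 ≤ K z)
    (hc : 0 ≤ c) (hw : w ≤ w')
    (hint : Integrable (fun z => K z * exp (c * (z + w' * K z))) F) :
    Integrable (fun z => K z * exp (c * (z + w * K z))) F := by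
  refine hint.mono' (by fun_prop) (ae_of_all _ fun z => ?_)
  rw [Real.norm_of_nonneg (mul_nonneg (hK z) (exp_pos _).le)]
  exact mul_exp_shift_le_of_le hc z (hK z) hw

theorem integral_mul_exp_shift_le_of_le (hKmeas : Measurable K) (hK : ∀ z, 0 ≤ K z)
    (hc : 0 ≤ c) (hw : w ≤ w')
    (hint : Integrable (fun z => K z * exp (c * (z + w' * K z))) F) :
    ∫ z, K z * exp (c * (z + w * K z)) ∂F ≤ ∫ z, K z * exp (c * (z + w' * K z)) ∂F :=
  integral_mono (integrable_mul_exp_shift_of_le hKmeas hK hc hw hint) hint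
    fun z => mul_exp_shift_le_of_le hc z (hK z) hw

theorem integrable_mul_exp_of_le_one (hKmeas : Measurable K) (hK : ∀ z, 0 ≤ K z ∧ K z ≤ 1)
    (hexp : Integrable (fun z => exp (c * z)) F) :
    Integrable (fun z => K z * exp (c * z)) F := by
  refine hexp.mono' (by fun_prop) (ae_of_all _ fun z => ?_)
  rw [Real.norm_of_nonneg (mul_nonneg (hK z).1 (exp_pos _).le)]
  exact mul_le_of_le_one_left (exp_pos _).le (hK z).2

end JumpIntegral

theorem stmt_6_general (γ B σ lam μ r w1 : ℝ)
    (hγ : 0 < γ) (hB : 0 < B) (hlam : 0 < lam)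
    (F : Measure ℝ)
    (K : ℝ → ℝ) (hKmeas : Measurable K) (hK : ∀ z, 0 ≤ K z ∧ K z < 1)
    (hexp : Integrable (fun z => Real.exp (γ * B * z)) F)
    (hC2 : lam * ∫ z, K z * Real.exp (γ * B * z) ∂F < μ - r)
    (hroot : γ * B * σ ^ 2 * w1 - (μ - r)
        + lam * ∫ z, K z * Real.exp (γ * B * (z + w1 * K z)) ∂F = 0) :
    0 < w1 := by
  by_contra! hw1
  have hc : 0 ≤ γ * B := (mul_pos hγ hB).le
  have hint₀ : Integrable (fun z => K z * exp (γ * B * (z + 0 * K z))) F := by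
    simpa using integrable_mul_exp_of_le_one hKmeas (fun z => ⟨(hK z).1, (hK z).2.le⟩) hexp
  have hle := integral_mul_exp_shift_le_of_le hKmeas (fun z => (hK z).1) hc hw1 hint₀
  simp only [zero_mul, add_zero] at hle
  have hdrift_nonpos : γ * B * σ ^ 2 * w1 ≤ 0 :=
    mul_nonpos_of_nonneg_of_nonpos (by positivity) hw1
  linarith [mul_le_mul_of_nonneg_left hle hlam.le]

/-- Proposition 5.5, second sign characterization: on the set C₂
(μ - r > λ ∫ K(z) e^{γBz} dF), the root of the first-order condition at u = 1
is positive, hence the optimal investment is positive. -/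
theorem stmt_6 (γ B σ lam μ r w1 : ℝ)
    (hγ : 0 < γ) (hB : 0 < B) (hσ : 0 < σ) (hlam : 0 < lam)
    (F : Measure ℝ) [IsProbabilityMeasure F] (hF0 : F (Set.Iio 0) = 0)
    (K : ℝ → ℝ) (hKmeas : Measurable K) (hK : ∀ z, 0 ≤ K z ∧ K z < 1)
    (hexp : Integrable (fun z => Real.exp (γ * B * z)) F)
    (hC2 : lam * ∫ z, K z * Real.exp (γ * B * z) ∂F < μ - r)
    (hroot : γ * B * σ ^ 2 * w1 - (μ - r)
        + lam * ∫ z, K z * Real.exp (γ * B * (z + w1 * K z)) ∂F = 0) :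
    0 < w1 :=
  stmt_6_general γ B σ lam μ r w1 hγ hB hlam F K hKmeas hK hexp hC2 hroot
end

section
/- Let F be a probability measure on [0,∞) not concentrated at 0, γ, b > 0, λ > 0, θ_R > 0, and define Ψ₁'(u) = -λ(1+θ_R)E[Z] + λ∫₀^∞ z e^{buz} dF(z) for u ≥ 0, where E[Z] = ∫z dF(z) ∈ (0,∞) and ∫ z e^{buz} dF(z) < ∞ for all u. Then Ψ₁'(0) = -λθ_R E[Z] < 0, so u = 0 (full reinsurance) is never a critical point with nonnegative derivative; the equation ∫₀^∞ z e^{buz} dF(z) = (1+θ_R)E[Z] has a unique solution ū > 0; and the minimizer of the corresponding convex function over [0,1] is min(1, ū). -/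
/-!
Write `H u = ∫ z e^{buz} dF`. Since `z (e^{bvz} - e^{buz}) > 0` for `z ≠ 0` when `u < v`, and
`E[Z] > 0` rules out `Z = 0` a.s., `H` is strictly increasing; it is continuous by dominated
convergence, and Bernoulli's inequality makes it grow at least linearly. So
`H u = (1 + θ) E[Z]` has exactly one root `ū`, positive because `H 0 = E[Z]`.
The objective `G` lies above its tangent lines `G m + (v - m) D m` (from `e^x ≥ 1 + x`), and
`D = λ (H - (1 + θ) E[Z])`: at `m = min 1 ū` either `D m = 0`, or `m = 1` and `D 1 < 0`; either
way `m` minimizes `G` on `[0, 1]`.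
-/

open MeasureTheory Real Set Filter

lemma mul_exp_sub_exp_pos {b u v z : ℝ} (hb : 0 < b) (huv : u < v) (hz : z ≠ 0) :
    0 < z * (exp (b * v * z) - exp (b * u * z)) := by
  rcases hz.lt_or_gt with hz | hz
  · have : exp (b * v * z) < exp (b * u * z) :=
      exp_lt_exp.2 (mul_lt_mul_of_neg_right (mul_lt_mul_of_pos_left huv hb) hz)
    exact mul_pos_of_neg_of_neg hz (by linarith)
  · have : exp (b * u * z) < exp (b * v * z) :=
      exp_lt_exp.2 (mul_lt_mul_of_pos_right (mul_lt_mul_of_pos_left huv hb) hz)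
    exact mul_pos hz (by linarith)

section MulExpIntegral

variable {μ : Measure ℝ} {b : ℝ}

lemma strictMono_integral_mul_exp (hb : 0 < b) (hμ : ∫ z, z ∂μ ≠ 0)
    (hint : ∀ u, Integrable (fun z => z * exp (b * u * z)) μ) :
    StrictMono fun u => ∫ z, z * exp (b * u * z) ∂μ := by
  intro u v huv
  set g : ℝ → ℝ := fun z => z * exp (b * v * z) - z * exp (b * u * z)
  have hg (z : ℝ) : g z = z * (exp (b * v * z) - exp (b * u * z)) := (mul_sub _ _ _).symm
  have hg_int : Integrable g μ := (hint v).sub (hint u)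
  have hg_nonneg : 0 ≤ g := fun z => by
    rcases eq_or_ne z 0 with hz | hz
    · simp [g, hz]
    · exact (hg z ▸ mul_exp_sub_exp_pos hb huv hz).le
  have hsupp : Function.support g = Function.support fun z : ℝ => z := by
    ext z
    simp only [Function.mem_support, hg]
    exact ⟨fun h hz => h (by simp [hz]), fun hz => (mul_exp_sub_exp_pos hb huv hz).ne'⟩
  have hmass : 0 < μ (Function.support fun z : ℝ => z) := by
    refine pos_iff_ne_zero.2 fun h => hμ (integral_eq_zero_of_ae ?_)
    exact ae_iff.2 (by simpa [Function.support] using h)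
  have hpos : 0 < ∫ z, g z ∂μ := by
    rwa [integral_pos_iff_support_of_nonneg hg_nonneg hg_int, hsupp]
  rw [integral_sub (hint v) (hint u)] at hpos
  linarith

lemma continuous_integral_mul_exp (hb : 0 ≤ b) (hμ : ∀ᵐ z ∂μ, 0 ≤ z)
    (hint : ∀ u, Integrable (fun z => z * exp (b * u * z)) μ) :
    Continuous fun u => ∫ z, z * exp (b * u * z) ∂μ := by
  refine continuous_iff_continuousAt.2 fun u₀ => ?_
  refine continuousAt_of_dominated (bound := fun z => z * exp (b * (u₀ + 1) * z))
    (Eventually.of_forall fun u => (hint u).1) ?_ (hint (u₀ + 1))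
    (Eventually.of_forall fun z => by fun_prop)
  filter_upwards [Iio_mem_nhds (lt_add_one u₀)] with u hu
  filter_upwards [hμ] with z hz
  rw [norm_mul, norm_of_nonneg hz, norm_of_nonneg (exp_pos _).le]
  gcongr
  exact hu.le

lemma integral_mul_exp_ge_chord (hμ : ∀ᵐ z ∂μ, 0 ≤ z)
    (hint : ∀ u, Integrable (fun z => z * exp (b * u * z)) μ) {U : ℝ} (hU : 1 ≤ U) :
    ∫ z, z * exp (b * 0 * z) ∂μ
        + U * (∫ z, z * exp (b * 1 * z) ∂μ - ∫ z, z * exp (b * 0 * z) ∂μ)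
      ≤ ∫ z, z * exp (b * U * z) ∂μ := by
  have hbernoulli (z : ℝ) : 1 + U * (exp (b * z) - 1) ≤ exp (b * U * z) := by
    have := one_add_mul_self_le_rpow_one_add (s := exp (b * z) - 1)
      (by linarith [exp_pos (b * z)]) hU
    rwa [add_sub_cancel, ← exp_mul, mul_right_comm] at this
  have hdiff : Integrable (fun z => z * exp (b * 1 * z) - z * exp (b * 0 * z)) μ :=
    (hint 1).sub (hint 0)
  rw [← integral_sub (hint 1) (hint 0), ← integral_const_mul,
    ← integral_add (hint 0) (hdiff.const_mul U)]
  refine integral_mono_ae ((hint 0).add (hdiff.const_mul U)) (hint U) ?_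
  filter_upwards [hμ] with z hz
  simp only [mul_zero, zero_mul, exp_zero, mul_one]
  nlinarith [mul_le_mul_of_nonneg_left (hbernoulli z) hz]

lemma tendsto_integral_mul_exp_atTop (hb : 0 < b) (hμ₀ : ∀ᵐ z ∂μ, 0 ≤ z)
    (hμ : ∫ z, z ∂μ ≠ 0) (hint : ∀ u, Integrable (fun z => z * exp (b * u * z)) μ) :
    Tendsto (fun u => ∫ z, z * exp (b * u * z) ∂μ) atTop atTop := by
  have hslope : 0 < ∫ z, z * exp (b * 1 * z) ∂μ - ∫ z, z * exp (b * 0 * z) ∂μ :=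
    sub_pos.2 (strictMono_integral_mul_exp hb hμ hint zero_lt_one)
  refine tendsto_atTop_mono' _ ?_ <| tendsto_atTop_add_const_left _
    (∫ z, z * exp (b * 0 * z) ∂μ) (tendsto_id.atTop_mul_const hslope)
  filter_upwards [eventually_ge_atTop 1] with U hU
  exact integral_mul_exp_ge_chord hμ₀ hint hU

lemma integral_exp_add_mul_le (hint : ∀ u, Integrable (fun z => z * exp (b * u * z)) μ)
    (hint₂ : ∀ u, Integrable (fun z => exp (b * u * z)) μ) (m v : ℝ) :
    ∫ z, exp (b * m * z) ∂μ + b * (v - m) * ∫ z, z * exp (b * m * z) ∂μ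
      ≤ ∫ z, exp (b * v * z) ∂μ := by
  rw [← integral_const_mul, ← integral_add (hint₂ m) ((hint m).const_mul _)]
  refine integral_mono ((hint₂ m).add ((hint m).const_mul _)) (hint₂ v) fun z => ?_
  have hsplit : exp (b * v * z) = exp (b * m * z) * exp (b * (v - m) * z) := by
    rw [← exp_add]; ring_nf
  have := mul_le_mul_of_nonneg_left (add_one_le_exp (b * (v - m) * z)) (exp_pos (b * m * z)).le
  simp only [hsplit]
  linarith

end MulExpIntegral

lemma StrictMono.existsUnique_pos_eq {f : ℝ → ℝ} (hf : StrictMono f) (hc : Continuous f)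
    (ht : Tendsto f atTop atTop) {T : ℝ} (h0 : f 0 < T) : ∃! u, 0 < u ∧ f u = T := by
  obtain ⟨U, hTU, hU⟩ := ((ht.eventually_gt_atTop T).and (eventually_ge_atTop 0)).exists
  obtain ⟨u, hu, hfu⟩ := intermediate_value_Ioo hU hc.continuousOn ⟨h0, hTU⟩
  exact ⟨u, ⟨hu.1, hfu⟩, fun w hw => hf.injective (hw.2.trans hfu.symm)⟩

theorem stmt_7_general (γ B lam θ b : ℝ)
    (hγ : 0 < γ) (hB : 0 < B) (hlam : 0 < lam) (hθ : 0 < θ) (hb : b = γ * B)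
    (F : Measure ℝ) [IsProbabilityMeasure F] (hF0 : F (Set.Iio 0) = 0)
    (hEZ : 0 < ∫ z, z ∂F)
    (hint : ∀ u : ℝ, Integrable (fun z => z * Real.exp (b * u * z)) F)
    (hint2 : ∀ u : ℝ, Integrable (fun z => Real.exp (b * u * z)) F)
    (D G : ℝ → ℝ)
    (hD : ∀ u, D u = -lam * (1 + θ) * (∫ z, z ∂F)
        + lam * ∫ z, z * Real.exp (b * u * z) ∂F)
    (hG : ∀ u, G u = -lam * (1 + θ) * (∫ z, z ∂F) * u
        + (lam / b) * ∫ z, Real.exp (b * u * z) ∂F) :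
    D 0 = -lam * θ * ∫ z, z ∂F ∧ D 0 < 0 ∧
      (∃! u : ℝ, 0 < u ∧
        ∫ z, z * Real.exp (b * u * z) ∂F = (1 + θ) * ∫ z, z ∂F) ∧
      ∀ ub : ℝ, 0 < ub →
        (∫ z, z * Real.exp (b * ub * z) ∂F = (1 + θ) * ∫ z, z ∂F) →
        IsMinOn G (Set.Icc 0 1) (min 1 ub) := by
  have hb₀ : 0 < b := hb ▸ mul_pos hγ hB
  have hF₀ : ∀ᵐ z ∂F, 0 ≤ z := ae_iff.2 (by simp only [not_le]; exact hF0)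
  have hH₀ : ∫ z, z * exp (b * 0 * z) ∂F = ∫ z, z ∂F := by simp
  have hmono := strictMono_integral_mul_exp hb₀ hEZ.ne' hint
  have hD₀ : D 0 = -lam * θ * ∫ z, z ∂F := by rw [hD, hH₀]; ring
  refine ⟨hD₀, hD₀ ▸ by nlinarith [mul_pos hlam hθ], ?_, fun ub _ hroot => ?_⟩
  · exact hmono.existsUnique_pos_eq (continuous_integral_mul_exp hb₀.le hF₀ hint)
      (tendsto_integral_mul_exp_atTop hb₀ hF₀ hEZ.ne' hint) (by rw [hH₀]; nlinarith)
  have htangent (m v : ℝ) : G m + lam * (v - m) *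
      (∫ z, z * exp (b * m * z) ∂F - (1 + θ) * ∫ z, z ∂F) ≤ G v := by
    have := mul_le_mul_of_nonneg_left (integral_exp_add_mul_le hint hint2 m v)
      (div_pos hlam hb₀).le
    rw [hG, hG]
    field_simp at this ⊢
    nlinarith
  refine isMinOn_iff.2 fun v hv => le_trans (le_add_of_nonneg_right ?_) (htangent _ v)
  rcases le_or_gt ub 1 with h1 | h1
  · simp [min_eq_right h1, hroot]
  · rw [min_eq_left h1.le]
    have := hmono h1
    exact mul_nonneg_of_nonpos_of_nonpos
      (mul_nonpos_of_nonneg_of_nonpos hlam.le (by linarith [hv.2])) (by linarith)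

/-- Example 5.1(1): under the expected value premium principle, full reinsurance is
never optimal (Ψ₁'(0) = -λθ_R E[Z] < 0), the first-order condition has a unique
positive root ū, and the minimizer of the convex objective over [0,1] is min(1, ū). -/
theorem stmt_7 (γ B lam θ b : ℝ)
    (hγ : 0 < γ) (hB : 0 < B) (hlam : 0 < lam) (hθ : 0 < θ) (hb : b = γ * B)
    (F : Measure ℝ) [IsProbabilityMeasure F] (hF0 : F (Set.Iio 0) = 0)
    (hFnot0 : F {0} < 1)
    (hZint : Integrable (fun z => z) F) (hEZ : 0 < ∫ z, z ∂F)
    (hint : ∀ u : ℝ, Integrable (fun z => z * Real.exp (b * u * z)) F)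
    (hint2 : ∀ u : ℝ, Integrable (fun z => Real.exp (b * u * z)) F)
    (D G : ℝ → ℝ)
    (hD : ∀ u, D u = -lam * (1 + θ) * (∫ z, z ∂F)
        + lam * ∫ z, z * Real.exp (b * u * z) ∂F)
    (hG : ∀ u, G u = -lam * (1 + θ) * (∫ z, z ∂F) * u
        + (lam / b) * ∫ z, Real.exp (b * u * z) ∂F) :
    D 0 = -lam * θ * ∫ z, z ∂F ∧ D 0 < 0 ∧
      (∃! u : ℝ, 0 < u ∧
        ∫ z, z * Real.exp (b * u * z) ∂F = (1 + θ) * ∫ z, z ∂F) ∧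
      ∀ ub : ℝ, 0 < ub →
        (∫ z, z * Real.exp (b * ub * z) ∂F = (1 + θ) * ∫ z, z ∂F) →
        IsMinOn G (Set.Icc 0 1) (min 1 ub) :=
  stmt_7_general γ B lam θ b hγ hB hlam hθ hb F hF0 hEZ hint hint2 D G hD hG
end

section
/- Let H(u,w) = q'(u) + λ∫₀^∞ z e^{γB(zu + wK(z))} dF(z) and H^{no}(u) = q'(u) + λ∫₀^∞ z e^{γBzu} dF(z), where q' ≤ 0 is continuous nondecreasing, λ > 0, γ, B > 0, K : [0,∞) → [0,1) with ∫zK(z)dF(z) > 0, and F a probability measure on [0,∞) with the required exponential moments. Then for w > 0, H(u,w) > H^{no}(u) for all u; since both are strictly increasing in u, the root ū(w) of H(·,w) = 0 satisfies ū(w) < ū^{no} (the root of H^{no} = 0) whenever w > 0, and ū(w) > ū^{no} whenever w < 0. -/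
open MeasureTheory Real Set

/-! For `z ≥ 0` the integrand `z e^{b (z u + w K z)}` is nondecreasing in `u` and in `w`, and
strictly increasing in either on `{z > 0, K z > 0}`, a set of positive `F`-measure because
`∫ z K dF > 0`. So `H` is strictly increasing in each variable, and `Hno = H (·, 0)`.
If `w > 0` and `H (ū, w) = 0 = H (ū_no, 0)`, then `H (ū, w) < H (ū_no, w)`, whence `ū < ū_no`;
symmetrically for `w < 0`. -/

theorem integral_lt_integral_of_ae_le_of_measure_setOf_lt_ne_zero {α : Type*}
    [MeasurableSpace α] {μ : Measure α} {f g : α → ℝ} (hf : Integrable f μ)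
    (hg : Integrable g μ) (hle : f ≤ᵐ[μ] g) (hlt : μ {x | f x < g x} ≠ 0) :
    ∫ x, f x ∂μ < ∫ x, g x ∂μ := by
  rw [← sub_pos, ← integral_sub hg hf]
  refine (integral_pos_iff_support_of_nonneg_ae ?_ (hg.sub hf)).2 ?_
  · filter_upwards [hle] with x hx using sub_nonneg.2 hx
  · refine pos_iff_ne_zero.2 fun h => hlt (measure_mono_null (fun x hx => ?_) h)
    exact (sub_pos.2 hx).ne'

section ShockIntegral

variable {μ : Measure ℝ} {K : ℝ → ℝ}

theorem measure_setOf_pos_and_pos_ne_zero (hμ : ∀ᵐ z ∂μ, 0 ≤ z) (hK : ∀ z, 0 ≤ K z)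
    (hKpos : 0 < ∫ z, z * K z ∂μ) : μ {z | 0 < z ∧ 0 < K z} ≠ 0 := by
  have hsupp : 0 < μ (Function.support fun z => z * K z) := by
    refine (integral_pos_iff_support_of_nonneg_ae ?_
      (Integrable.of_integral_ne_zero hKpos.ne')).1 hKpos
    filter_upwards [hμ] with z hz using mul_nonneg hz (hK z)
  refine (hsupp.trans_le (measure_mono_ae ?_)).ne'
  filter_upwards [hμ] with z hz (hzK : z * K z ≠ 0)
  exact ⟨hz.lt_of_ne (left_ne_zero_of_mul hzK).symm,
    (hK z).lt_of_ne (right_ne_zero_of_mul hzK).symm⟩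

theorem integral_mul_exp_lt_of_le_of_le {b u₁ u₂ w₁ w₂ : ℝ} (hb : 0 < b)
    (hμ : ∀ᵐ z ∂μ, 0 ≤ z) (hK : ∀ z, 0 ≤ K z) (hS : μ {z | 0 < z ∧ 0 < K z} ≠ 0)
    (hint : ∀ u w : ℝ, Integrable (fun z => z * exp (b * (z * u + w * K z))) μ)
    (hu : u₁ ≤ u₂) (hw : w₁ ≤ w₂) (hlt : u₁ < u₂ ∨ w₁ < w₂) :
    ∫ z, z * exp (b * (z * u₁ + w₁ * K z)) ∂μ < ∫ z, z * exp (b * (z * u₂ + w₂ * K z)) ∂μ := by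
  refine integral_lt_integral_of_ae_le_of_measure_setOf_lt_ne_zero (hint _ _) (hint _ _) ?_
    fun h => hS (measure_mono_null (fun z ⟨hz, hKz⟩ => ?_) h)
  · filter_upwards [hμ] with z hz
    have : z * u₁ + w₁ * K z ≤ z * u₂ + w₂ * K z := by
      gcongr
      exact hK z
    gcongr
  · have : z * u₁ + w₁ * K z < z * u₂ + w₂ * K z := by
      rcases hlt with h | h
      · exact add_lt_add_of_lt_of_le (by gcongr) (by gcongr)
      · exact add_lt_add_of_le_of_lt (by gcongr) (by gcongr)
    show z * exp _ < z * exp _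
    gcongr

end ShockIntegral

theorem stmt_16_general (γ B lam b : ℝ)
    (hγ : 0 < γ) (hB : 0 < B) (hlam : 0 < lam) (hb : b = γ * B)
    (F : Measure ℝ) (hF0 : F (Set.Iio 0) = 0)
    (K : ℝ → ℝ) (hK : ∀ z, 0 ≤ K z ∧ K z < 1)
    (hKpos : 0 < ∫ z, z * K z ∂F)
    (hint : ∀ u w : ℝ,
      Integrable (fun z => z * Real.exp (b * (z * u + w * K z))) F)
    (q' : ℝ → ℝ) (hq'mono : Monotone q')
    (H : ℝ → ℝ → ℝ) (Hno : ℝ → ℝ)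
    (hH : ∀ u w, H u w = q' u + lam * ∫ z, z * Real.exp (b * (z * u + w * K z)) ∂F)
    (hHno : ∀ u, Hno u = q' u + lam * ∫ z, z * Real.exp (b * z * u) ∂F) :
    (∀ u w, 0 < w → Hno u < H u w) ∧
      (∀ w ub ubno, 0 < w → H ub w = 0 → Hno ubno = 0 → ub < ubno) ∧
      (∀ w ub ubno, w < 0 → H ub w = 0 → Hno ubno = 0 → ubno < ub) := by
  have hb' : 0 < b := hb ▸ mul_pos hγ hB
  have hμ : ∀ᵐ z ∂F, 0 ≤ z := ae_iff.2 (by simp only [not_le]; exact hF0)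
  have hK₀ : ∀ z, 0 ≤ K z := fun z => (hK z).1
  have hS := measure_setOf_pos_and_pos_ne_zero hμ hK₀ hKpos
  have hHno_eq : ∀ u, Hno u = H u 0 := fun u => by simp [hHno, hH, mul_assoc]
  have hH_lt : ∀ {u₁ u₂ w₁ w₂}, u₁ ≤ u₂ → w₁ ≤ w₂ → (u₁ < u₂ ∨ w₁ < w₂) →
      H u₁ w₁ < H u₂ w₂ := fun hu hw hlt => by
    rw [hH, hH]
    exact add_lt_add_of_le_of_lt (hq'mono hu) <| mul_lt_mul_of_pos_left
      (integral_mul_exp_lt_of_le_of_le hb' hμ hK₀ hS hint hu hw hlt) hlam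
  have hH_mono : ∀ w, StrictMono (H · w) := fun w _ _ hu => hH_lt hu.le le_rfl (.inl hu)
  have hH_lt_w : ∀ {u w₁ w₂}, w₁ < w₂ → H u w₁ < H u w₂ := fun hw => hH_lt le_rfl hw.le (.inr hw)
  refine ⟨fun u w hw => ?_, fun w ub ubno hw hub hubno => ?_, fun w ub ubno hw hub hubno => ?_⟩
  · exact hHno_eq u ▸ hH_lt_w hw
  · rw [hHno_eq] at hubno
    refine (hH_mono w).lt_iff_lt.1 ?_
    calc H ub w = H ubno 0 := hub.trans hubno.symm
      _ < H ubno w := hH_lt_w hw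
  · rw [hHno_eq] at hubno
    refine (hH_mono w).lt_iff_lt.1 ?_
    calc H ubno w < H ubno 0 := hH_lt_w hw
      _ = H ub w := hubno.trans hub.symm

/-- Proposition 6.1(ii)-(iii): comparison of the optimal retention levels with and
without common shock. For w > 0, H(u,w) > H^{no}(u), so the root of H(·,w) = 0 is
strictly smaller than the root of H^{no} = 0, and conversely for w < 0. -/
theorem stmt_16 (γ B lam b : ℝ)
    (hγ : 0 < γ) (hB : 0 < B) (hlam : 0 < lam) (hb : b = γ * B)
    (F : Measure ℝ) [IsProbabilityMeasure F] (hF0 : F (Set.Iio 0) = 0)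
    (K : ℝ → ℝ) (hKmeas : Measurable K) (hK : ∀ z, 0 ≤ K z ∧ K z < 1)
    (hKpos : 0 < ∫ z, z * K z ∂F)
    (hint : ∀ u w : ℝ,
      Integrable (fun z => z * Real.exp (b * (z * u + w * K z))) F)
    (q' : ℝ → ℝ) (hq'cont : Continuous q') (hq'mono : Monotone q')
    (hq'nonpos : ∀ u, q' u ≤ 0)
    (H : ℝ → ℝ → ℝ) (Hno : ℝ → ℝ)
    (hH : ∀ u w, H u w = q' u + lam * ∫ z, z * Real.exp (b * (z * u + w * K z)) ∂F)
    (hHno : ∀ u, Hno u = q' u + lam * ∫ z, z * Real.exp (b * z * u) ∂F) :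
    (∀ u w, 0 < w → Hno u < H u w) ∧
      (∀ w ub ubno, 0 < w → H ub w = 0 → Hno ubno = 0 → ub < ubno) ∧
      (∀ w ub ubno, w < 0 → H ub w = 0 → Hno ubno = 0 → ubno < ub) :=
  stmt_16_general γ B lam b hγ hB hlam hb F hF0 K hK hKpos hint q' hq'mono H Hno hH hHno
end
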